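/- arXiv:0802.0865 — 2 statements merged into one kernel-verified Lean document; each statement's English description precedes it below -/
import Mathlib

section
/- In the logic G, for every n ≥ 1 and every type τ at which ∇-quantification is available, the formula ∃x₁…∃xₙ. ⋀_{1≤i<j≤n} xᵢ ≠ xⱼ is provable, where ≠ is the negation of the equality predicate defined by ∀x. x = x ≜ ⊤. -/
/-! A deep embedding of the logic G: first-order-style terms with eigenvariables
and nominal constants, formulas with de Bruijn quantifiers (∀, ∃, ∇), a natural
number predicate, stratified definitional clauses of the form
∀x⃗.(∇z⃗. p t⃗) ≜ B, and a height-indexed sequent calculus with the rules of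
Figures 1–3 of the paper (core rules, defL/defR, nat induction). -/

/-- Terms: de Bruijn variables (bound by quantifiers), eigenvariables,
nominal constants, ordinary constants, and application. -/
inductive Tm : Type
  | var : ℕ → Tm
  | evar : ℕ → Tm
  | nom : ℕ → Tm
  | cst : ℕ → Tm
  | app : Tm → Tm → Tm
  deriving DecidableEq

namespace Tm

/-- Support: nominal constants occurring in a term. -/
def supp : Tm → Finset ℕ
  | var _ => ∅ | evar _ => ∅ | nom a => {a} | cst _ => ∅
  | app m n => supp m ∪ supp n

/-- Eigenvariables occurring in a term. -/
def evars : Tm → Finset ℕ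
  | var _ => ∅ | evar h => {h} | nom _ => ∅ | cst _ => ∅
  | app m n => evars m ∪ evars n

/-- Free de Bruijn variables of a term. -/
def fvB : Tm → Finset ℕ
  | var k => {k} | evar _ => ∅ | nom _ => ∅ | cst _ => ∅
  | app m n => fvB m ∪ fvB n

/-- Substitute the (closed) term u for de Bruijn variable k. -/
def substV (k : ℕ) (u : Tm) : Tm → Tm
  | var n => if n = k then u else if k < n then var (n - 1) else var n
  | evar h => evar h | nom a => nom a | cst c => cst c
  | app m n => app (substV k u m) (substV k u n)

/-- Apply a substitution θ for eigenvariables. -/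
def substE (θ : ℕ → Tm) : Tm → Tm
  | var n => var n | evar h => θ h | nom a => nom a | cst c => cst c
  | app m n => app (substE θ m) (substE θ n)

/-- Rename nominal constants along ρ. -/
def renameNom (ρ : ℕ → ℕ) : Tm → Tm
  | var n => var n | evar h => evar h | nom a => nom (ρ a) | cst c => cst c
  | app m n => app (renameNom ρ m) (renameNom ρ n)

/-- Permute nominal constants. -/
def permN (π : Equiv.Perm ℕ) : Tm → Tm := renameNom π

/-- `appList t [c₁,…,cₙ]` is the application `t c₁ ⋯ cₙ` (used for raising). -/
def appList (t : Tm) (cs : List ℕ) : Tm :=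
  cs.foldl (fun acc a => Tm.app acc (Tm.nom a)) t

end Tm

/-- Formulas of G. -/
inductive Fm : Type
  | atom : ℕ → List Tm → Fm
  | top : Fm
  | bot : Fm
  | conj : Fm → Fm → Fm
  | disj : Fm → Fm → Fm
  | imp : Fm → Fm → Fm
  | all : Fm → Fm
  | ex : Fm → Fm
  | nab : Fm → Fm
  | natf : Tm → Fm
  deriving DecidableEq

namespace Fm

def supp : Fm → Finset ℕ
  | atom _ ts => ts.foldr (fun t s => t.supp ∪ s) ∅
  | top => ∅ | bot => ∅
  | conj B C => supp B ∪ supp C | disj B C => supp B ∪ supp C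
  | imp B C => supp B ∪ supp C
  | all B => supp B | ex B => supp B | nab B => supp B
  | natf t => t.supp

def evars : Fm → Finset ℕ
  | atom _ ts => ts.foldr (fun t s => t.evars ∪ s) ∅
  | top => ∅ | bot => ∅
  | conj B C => evars B ∪ evars C | disj B C => evars B ∪ evars C
  | imp B C => evars B ∪ evars C
  | all B => evars B | ex B => evars B | nab B => evars B
  | natf t => t.evars

def fvB : Fm → Finset ℕ
  | atom _ ts => ts.foldr (fun t s => t.fvB ∪ s) ∅
  | top => ∅ | bot => ∅
  | conj B C => fvB B ∪ fvB C | disj B C => fvB B ∪ fvB C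
  | imp B C => fvB B ∪ fvB C
  | all B => (fvB B).erase 0 |>.image (· - 1)
  | ex B => (fvB B).erase 0 |>.image (· - 1)
  | nab B => (fvB B).erase 0 |>.image (· - 1)
  | natf t => t.fvB

/-- Substitute a closed term u for de Bruijn variable k. -/
def substV (k : ℕ) (u : Tm) : Fm → Fm
  | atom p ts => atom p (ts.map (Tm.substV k u))
  | top => top | bot => bot
  | conj B C => conj (substV k u B) (substV k u C)
  | disj B C => disj (substV k u B) (substV k u C)
  | imp B C => imp (substV k u B) (substV k u C)
  | all B => all (substV (k+1) u B)
  | ex B => ex (substV (k+1) u B)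
  | nab B => nab (substV (k+1) u B)
  | natf t => natf (t.substV k u)

/-- Apply an eigenvariable substitution. -/
def substE (θ : ℕ → Tm) : Fm → Fm
  | atom p ts => atom p (ts.map (Tm.substE θ))
  | top => top | bot => bot
  | conj B C => conj (substE θ B) (substE θ C)
  | disj B C => disj (substE θ B) (substE θ C)
  | imp B C => imp (substE θ B) (substE θ C)
  | all B => all (substE θ B)
  | ex B => ex (substE θ B)
  | nab B => nab (substE θ B)
  | natf t => natf (t.substE θ)

def renameNom (ρ : ℕ → ℕ) : Fm → Fm
  | atom p ts => atom p (ts.map (Tm.renameNom ρ))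
  | top => top | bot => bot
  | conj B C => conj (renameNom ρ B) (renameNom ρ C)
  | disj B C => disj (renameNom ρ B) (renameNom ρ C)
  | imp B C => imp (renameNom ρ B) (renameNom ρ C)
  | all B => all (renameNom ρ B)
  | ex B => ex (renameNom ρ B)
  | nab B => nab (renameNom ρ B)
  | natf t => natf (t.renameNom ρ)

/-- Permute nominal constants in a formula. -/
def permN (π : Equiv.Perm ℕ) : Fm → Fm := renameNom π

/-- The level of a formula, given levels `pl` of predicates. -/
def lvl (pl : ℕ → ℕ) : Fm → ℕ
  | atom p _ => pl p
  | top => 0 | bot => 0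
  | conj B C => max (lvl pl B) (lvl pl C)
  | disj B C => max (lvl pl B) (lvl pl C)
  | imp B C => max (lvl pl B + 1) (lvl pl C)
  | all B => lvl pl B | ex B => lvl pl B | nab B => lvl pl B
  | natf _ => 0

end Fm

/-- A definitional clause ∀x⃗.(∇z⃗. p t⃗) ≜ B.  The ∇-bound variables z⃗ are
represented by the nominal constants 0,…,nab−1 (to be renamed to fresh nominal
constants on use); the ∀-bound variables x⃗ are the eigenvariables of the
clause. -/
structure Clause where
  pred : ℕ
  nab : ℕ
  args : List Tm
  body : Fm

namespace Clause

/-- The head of the instance of a clause obtained by renaming its ∇-variables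
with ρ and instantiating its ∀-variables with θ. -/
def instHead (c : Clause) (ρ : ℕ → ℕ) (θ : ℕ → Tm) : Fm :=
  Fm.atom c.pred (c.args.map fun t => (t.renameNom ρ).substE θ)

/-- The corresponding instance of the body. -/
def instBody (c : Clause) (ρ : ℕ → ℕ) (θ : ℕ → Tm) : Fm :=
  (c.body.renameNom ρ).substE θ

end Clause

/-- Well-formedness of a set of definitional clauses: stratified
(lvl(B) ≤ lvl(H)), no nominal constants besides the ∇-variables, and no
dangling de Bruijn variables. -/
structure GoodDefs (pl : ℕ → ℕ) (D : Set Clause) : Prop where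
  strat : ∀ c ∈ D, c.body.lvl pl ≤ pl c.pred
  headNoms : ∀ c ∈ D, ∀ t ∈ c.args, t.supp ⊆ Finset.range c.nab
  bodyNoms : ∀ c ∈ D, c.body.supp ⊆ Finset.range c.nab
  headClosed : ∀ c ∈ D, ∀ t ∈ c.args, t.fvB = ∅
  bodyClosed : ∀ c ∈ D, c.body.fvB = ∅

/-- Support of a context. -/
def ctxSupp (Γ : List Fm) : Finset ℕ := Γ.foldr (fun B s => B.supp ∪ s) ∅

/-- Eigenvariables of a context. -/
def ctxEvars (Γ : List Fm) : Finset ℕ := Γ.foldr (fun B s => B.evars ∪ s) ∅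

def zeroTm : Tm := Tm.cst 0
def succTm (t : Tm) : Tm := Tm.app (Tm.cst 1) t

/-- The sequent calculus for G, over a set of definitional clauses D.
`GSeq D cut h Γ C` means that Σ : Γ ⊢ C has a derivation of height (at most) h;
the `cut` flag records whether the cut rule may be used. -/
inductive GSeq (D : Set Clause) : Bool → ℕ → List Fm → Fm → Prop
  /-- initial rule: π.B = B' for some permutation of nominal constants -/
  | idr {b n Γ B C} (π : Equiv.Perm ℕ) (hfin : {x | π x ≠ x}.Finite)
      (hmem : B ∈ Γ) (hperm : B.permN π = C) : GSeq D b (n+1) Γ C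
  /-- cut -/
  | cut {n Γ Δ B C} : GSeq D true n Γ B → GSeq D true n (B :: Δ) C →
      GSeq D true (n+1) (Γ ++ Δ) C
  /-- contraction -/
  | contr {b n Γ B C} : GSeq D b n (B :: B :: Γ) C → GSeq D b (n+1) (B :: Γ) C
  /-- contexts are multisets: exchange preserves height -/
  | exch {b n Γ Γ' C} : Γ.Perm Γ' → GSeq D b n Γ C → GSeq D b n Γ' C
  | botL {b n Γ C} : GSeq D b (n+1) (Fm.bot :: Γ) C
  | topR {b n Γ} : GSeq D b (n+1) Γ Fm.top
  | conjL1 {b n Γ B₁ B₂ C} : GSeq D b n (B₁ :: Γ) C →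
      GSeq D b (n+1) (Fm.conj B₁ B₂ :: Γ) C
  | conjL2 {b n Γ B₁ B₂ C} : GSeq D b n (B₂ :: Γ) C →
      GSeq D b (n+1) (Fm.conj B₁ B₂ :: Γ) C
  | conjR {b n Γ B C} : GSeq D b n Γ B → GSeq D b n Γ C →
      GSeq D b (n+1) Γ (Fm.conj B C)
  | disjL {b n Γ B₁ B₂ C} : GSeq D b n (B₁ :: Γ) C → GSeq D b n (B₂ :: Γ) C →
      GSeq D b (n+1) (Fm.disj B₁ B₂ :: Γ) C
  | disjR1 {b n Γ B₁ B₂} : GSeq D b n Γ B₁ → GSeq D b (n+1) Γ (Fm.disj B₁ B₂)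
  | disjR2 {b n Γ B₁ B₂} : GSeq D b n Γ B₂ → GSeq D b (n+1) Γ (Fm.disj B₁ B₂)
  | impL {b n Γ B E C} : GSeq D b n Γ B → GSeq D b n (E :: Γ) C →
      GSeq D b (n+1) (Fm.imp B E :: Γ) C
  | impR {b n Γ B C} : GSeq D b n (B :: Γ) C → GSeq D b (n+1) Γ (Fm.imp B C)
  /-- ∀L: instantiate with any well-formed (closed) term -/
  | allL {b n Γ B C} (t : Tm) (ht : t.fvB = ∅) :
      GSeq D b n (B.substV 0 t :: Γ) C → GSeq D b (n+1) (Fm.all B :: Γ) C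
  /-- ∀R: raised over supp(B) with a fresh eigenvariable h -/
  | allR {b n Γ B} (h : ℕ) (cs : List ℕ)
      (hfresh : h ∉ ctxEvars Γ ∪ (Fm.all B).evars)
      (hcs : cs.toFinset = (Fm.all B).supp) (hnd : cs.Nodup) :
      GSeq D b n Γ (B.substV 0 (Tm.appList (Tm.evar h) cs)) →
      GSeq D b (n+1) Γ (Fm.all B)
  /-- ∃L: raised over supp(B) with a fresh eigenvariable h -/
  | exL {b n Γ B C} (h : ℕ) (cs : List ℕ)
      (hfresh : h ∉ ctxEvars Γ ∪ (Fm.ex B).evars ∪ C.evars)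
      (hcs : cs.toFinset = (Fm.ex B).supp) (hnd : cs.Nodup) :
      GSeq D b n (B.substV 0 (Tm.appList (Tm.evar h) cs) :: Γ) C →
      GSeq D b (n+1) (Fm.ex B :: Γ) C
  | exR {b n Γ B} (t : Tm) (ht : t.fvB = ∅) :
      GSeq D b n Γ (B.substV 0 t) → GSeq D b (n+1) Γ (Fm.ex B)
  /-- ∇L: use a nominal constant a ∉ supp(B) -/
  | nabL {b n Γ B C} (a : ℕ) (ha : a ∉ (Fm.nab B).supp) :
      GSeq D b n (B.substV 0 (Tm.nom a) :: Γ) C →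
      GSeq D b (n+1) (Fm.nab B :: Γ) C
  | nabR {b n Γ B} (a : ℕ) (ha : a ∉ (Fm.nab B).supp) :
      GSeq D b n Γ (B.substV 0 (Tm.nom a)) → GSeq D b (n+1) Γ (Fm.nab B)
  /-- defR: back-chain on a definitional clause, renaming its ∇-variables to
  fresh nominal constants ρ and instantiating its ∀-variables by θ, whose
  range may not contain the fresh nominal constants -/
  | defR {b n Γ} (c : Clause) (hc : c ∈ D) (ρ : ℕ → ℕ) (θ : ℕ → Tm)
      (hρinj : Set.InjOn ρ (Set.Iio c.nab))
      (hρfresh : ∀ i < c.nab, ρ i ∉ ctxSupp Γ ∪ (c.instHead ρ θ).supp \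
          ((Finset.range c.nab).image ρ))
      (hθ : ∀ v i, i < c.nab → ρ i ∉ (θ v).supp)
      (hθc : ∀ v, (θ v).fvB = ∅) :
      GSeq D b n Γ (c.instBody ρ θ) → GSeq D b (n+1) Γ (c.instHead ρ θ)
  /-- defL: case analysis on all clauses and all unifiers of the atom with
  (renamed, instantiated) clause heads; η instantiates the eigenvariables of
  the sequent, with nominal-constant-free range -/
  | defL {b n Γ C} (p : ℕ) (ts : List Tm)
      (prem : ∀ c ∈ D, ∀ ρ : ℕ → ℕ, ∀ θ η : ℕ → Tm,
        Set.InjOn ρ (Set.Iio c.nab) →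
        (∀ i < c.nab, ρ i ∉ ctxSupp (Fm.atom p ts :: Γ) ∪ C.supp) →
        (∀ v i, i < c.nab → ρ i ∉ (θ v).supp) →
        (∀ v, (θ v).fvB = ∅) →
        (∀ v, (η v).supp = ∅ ∧ (η v).fvB = ∅) →
        c.instHead ρ θ = (Fm.atom p ts).substE η →
        GSeq D b n (c.instBody ρ θ :: Γ.map (Fm.substE η)) (C.substE η)) :
      GSeq D b (n+1) (Fm.atom p ts :: Γ) C
  /-- natural number induction -/
  | natL {b n Γ C N} (I : Fm) (x : ℕ)
      (hx : x ∉ I.evars)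
      (hz : GSeq D b n [] (I.substV 0 zeroTm))
      (hs : GSeq D b n [I.substV 0 (Tm.evar x)] (I.substV 0 (succTm (Tm.evar x))))
      (hN : GSeq D b n (I.substV 0 N :: Γ) C) :
      GSeq D b (n+1) (Fm.natf N :: Γ) C
  | natRz {b n Γ} : GSeq D b (n+1) Γ (Fm.natf zeroTm)
  | natRs {b n Γ N} : GSeq D b n Γ (Fm.natf N) →
      GSeq D b (n+1) Γ (Fm.natf (succTm N))

/-- The equality predicate (predicate number 0), defined by the single clause
∀x. x = x ≜ ⊤. -/
def eqClause : Clause := ⟨0, 0, [Tm.evar 0, Tm.evar 0], Fm.top⟩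

/-- A definition consisting exactly of the equality clause. -/
def Deq : Set Clause := {eqClause}

/-- xᵢ ≠ xⱼ, i.e. (xᵢ = xⱼ) ⊃ ⊥, on de Bruijn variables i and j. -/
def neqFm (i j : ℕ) : Fm := Fm.imp (Fm.atom 0 [Tm.var i, Tm.var j]) Fm.bot

/-- All pairs (i,j) with i < j < n. -/
def allPairs (n : ℕ) : List (ℕ × ℕ) :=
  (List.range n).flatMap fun i =>
    (List.range n).filterMap fun j => if i < j then some (i, j) else none

/-- The conjunction ⋀_{i<j<n} xᵢ ≠ xⱼ. -/
def distinctBody (n : ℕ) : Fm :=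
  (allPairs n).foldr (fun p F => Fm.conj (neqFm p.1 p.2) F) Fm.top

/-- Iterated existential quantification ∃x₁…∃xₙ. -/
def exN : ℕ → Fm → Fm
  | 0, F => F
  | k + 1, F => Fm.ex (exN k F)

namespace GSeq

variable {D : Set Clause} {b : Bool} {n m : ℕ} {Γ : List Fm} {C : Fm}

theorem height_succ (hd : GSeq D b n Γ C) : GSeq D b (n + 1) Γ C := by
  induction hd with
  | idr π hfin hmem hperm => exact idr π hfin hmem hperm
  | cut _ _ ih₁ ih₂ => exact cut ih₁ ih₂
  | contr _ ih => exact contr ih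
  | exch hp _ ih => exact exch hp ih
  | botL => exact botL
  | topR => exact topR
  | conjL1 _ ih => exact conjL1 ih
  | conjL2 _ ih => exact conjL2 ih
  | conjR _ _ ih₁ ih₂ => exact conjR ih₁ ih₂
  | disjL _ _ ih₁ ih₂ => exact disjL ih₁ ih₂
  | disjR1 _ ih => exact disjR1 ih
  | disjR2 _ ih => exact disjR2 ih
  | impL _ _ ih₁ ih₂ => exact impL ih₁ ih₂
  | impR _ ih => exact impR ih
  | allL t ht _ ih => exact allL t ht ih
  | allR h cs hfresh hcs hnd _ ih => exact allR h cs hfresh hcs hnd ih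
  | exL h cs hfresh hcs hnd _ ih => exact exL h cs hfresh hcs hnd ih
  | exR t ht _ ih => exact exR t ht ih
  | nabL a ha _ ih => exact nabL a ha ih
  | nabR a ha _ ih => exact nabR a ha ih
  | defR c hc ρ θ hρinj hρfresh hθ hθc _ ih => exact defR c hc ρ θ hρinj hρfresh hθ hθc ih
  | defL p ts _ ih => exact defL p ts ih
  | natL I x hx _ _ _ ihz ihs ihN => exact natL I x hx ihz ihs ihN
  | natRz => exact natRz
  | natRs _ ih => exact natRs ih

theorem height_mono (hnm : n ≤ m) (hd : GSeq D b n Γ C) : GSeq D b m Γ C := by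
  induction m, hnm using Nat.le_induction with
  | base => exact hd
  | succ _ _ ih => exact ih.height_succ

theorem exists_foldr_conj :
    ∀ {l : List Fm}, (∀ B ∈ l, ∃ n, GSeq D b n Γ B) →
      ∃ n, GSeq D b n Γ (l.foldr Fm.conj Fm.top)
  | [], _ => ⟨1, topR⟩
  | B :: l, hl => by
    obtain ⟨n₁, hB⟩ := hl B List.mem_cons_self
    obtain ⟨n₂, hl⟩ := exists_foldr_conj fun B' hB' => hl B' (List.mem_cons_of_mem B hB')
    exact ⟨max n₁ n₂ + 1,
      conjR (hB.height_mono (le_max_left _ _)) (hl.height_mono (le_max_right _ _))⟩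

end GSeq

def Tm.instNoms : ℕ → Tm → Tm
  | 0, t => t
  | k + 1, t => instNoms k (Tm.substV k (Tm.nom k) t)

/-- `B.instNoms k` instantiates the outermost `k` quantifiers of `exN k B`
(in the order `exR` peels them) by the nominal constants `k - 1, …, 0`. -/
def Fm.instNoms : ℕ → Fm → Fm
  | 0, B => B
  | k + 1, B => instNoms k (B.substV k (Tm.nom k))

namespace Tm

@[simp]
theorem instNoms_nom (k a : ℕ) : (nom a).instNoms k = nom a := by
  induction k with
  | zero => rfl
  | succ k ih => exact ih

theorem instNoms_var {k i : ℕ} (hi : i < k) : (var i).instNoms k = nom i := by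
  induction k with
  | zero => omega
  | succ k ih =>
    rcases Nat.lt_succ_iff_lt_or_eq.mp hi with hi | rfl
    · simp only [instNoms, substV, if_neg hi.ne, if_neg (Nat.lt_asymm hi), ih hi]
    · simp [instNoms, substV]

end Tm

namespace Fm

variable (k : ℕ)

@[simp]
theorem instNoms_top : top.instNoms k = top := by
  induction k with
  | zero => rfl
  | succ k ih => exact ih

@[simp]
theorem instNoms_bot : bot.instNoms k = bot := by
  induction k with
  | zero => rfl
  | succ k ih => exact ih

@[simp]
theorem instNoms_atom (p : ℕ) (ts : List Tm) :
    (atom p ts).instNoms k = atom p (ts.map (Tm.instNoms k)) := by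
  induction k generalizing ts with
  | zero => simp [instNoms, Tm.instNoms]
  | succ k ih => simp [instNoms, Tm.instNoms, substV, ih]

@[simp]
theorem instNoms_conj (B C : Fm) : (conj B C).instNoms k = conj (B.instNoms k) (C.instNoms k) := by
  induction k generalizing B C with
  | zero => rfl
  | succ k ih => exact ih _ _

@[simp]
theorem instNoms_imp (B C : Fm) : (imp B C).instNoms k = imp (B.instNoms k) (C.instNoms k) := by
  induction k generalizing B C with
  | zero => rfl
  | succ k ih => exact ih _ _

theorem instNoms_foldr_conj (l : List Fm) :
    (l.foldr conj top).instNoms k = (l.map (instNoms k)).foldr conj top := by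
  induction l with
  | nil => simp
  | cons B l ih => simp [ih]

end Fm

theorem substV_exN (k j : ℕ) (t : Tm) (B : Fm) :
    (exN k B).substV j t = exN k (B.substV (j + k) t) := by
  induction k generalizing j with
  | zero => rfl
  | succ k ih =>
    simp only [exN, Fm.substV, ih]
    rw [Nat.add_right_comm, Nat.add_assoc]

theorem GSeq.exN_of_instNoms {D : Set Clause} {b : Bool} {n : ℕ} {Γ : List Fm} :
    ∀ {k : ℕ} {B : Fm}, GSeq D b n Γ (B.instNoms k) → GSeq D b (n + k) Γ (exN k B)
  | 0, _, hd => hd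
  | k + 1, B, hd => by
    refine exR (Tm.nom k) rfl ?_
    rw [substV_exN, Nat.zero_add]
    exact exN_of_instNoms hd

theorem mem_allPairs {n : ℕ} {p : ℕ × ℕ} (hp : p ∈ allPairs n) : p.1 < p.2 ∧ p.2 < n := by
  simp only [allPairs, List.mem_flatMap, List.mem_filterMap, List.mem_range] at hp
  obtain ⟨i, -, j, hj, hij⟩ := hp
  split at hij
  · cases hij
    exact ⟨by assumption, hj⟩
  · cases hij

theorem distinctBody_instNoms (n : ℕ) :
    (distinctBody n).instNoms n = ((allPairs n).map fun p =>
      Fm.imp (Fm.atom 0 [Tm.nom p.1, Tm.nom p.2]) Fm.bot).foldr Fm.conj Fm.top := by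
  rw [distinctBody, ← List.foldr_map, Fm.instNoms_foldr_conj, List.map_map]
  congr 1
  refine List.map_congr_left fun p hp => ?_
  obtain ⟨hlt, hn⟩ := mem_allPairs hp
  simp [neqFm, Tm.instNoms_var hn, Tm.instNoms_var (hlt.trans hn)]

/-- `defL` has no premise here: no instance of the head `x = x` unifies with `a = a'`. -/
theorem GSeq.nom_ne_nom {b : Bool} {Γ : List Fm} {a a' : ℕ} (h : a ≠ a') :
    GSeq Deq b 2 Γ (Fm.imp (Fm.atom 0 [Tm.nom a, Tm.nom a']) Fm.bot) := by
  refine impR (defL 0 _ fun c hc ρ θ η _ _ _ _ _ heq => ?_)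
  obtain rfl : c = eqClause := hc
  simp only [Clause.instHead, eqClause, List.map, Tm.renameNom, Tm.substE, Fm.substE,
    Fm.atom.injEq, List.cons.injEq] at heq
  obtain ⟨-, hθa, hθa', -⟩ := heq
  exact absurd (Tm.nom.inj (hθa.symm.trans hθa')) h

theorem exists_n_distinct_general (n : ℕ) :
    ∃ m, GSeq Deq false m [] (exN n (distinctBody n)) := by
  obtain ⟨m, hm⟩ : ∃ m, GSeq Deq false m [] ((distinctBody n).instNoms n) := by
    rw [distinctBody_instNoms]
    refine GSeq.exists_foldr_conj fun B hB => ?_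
    obtain ⟨p, hp, rfl⟩ := List.mem_map.mp hB
    exact ⟨2, GSeq.nom_ne_nom (mem_allPairs hp).1.ne⟩
  exact ⟨m + n, hm.exN_of_instNoms⟩

/-- for every n ≥ 1, the formula
∃x₁…∃xₙ. ⋀_{1≤i<j≤n} xᵢ ≠ xⱼ is provable in G with equality defined by
∀x. x = x ≜ ⊤, since distinct nominal constants are provably unequal. -/
theorem exists_n_distinct (n : ℕ) (hn : 1 ≤ n) :
    ∃ m, GSeq Deq false m [] (exN n (distinctBody n)) :=
  exists_n_distinct_general n
end

section
/- In the logic G with fresh defined by the clause ∀E.(∇x. fresh x E) ≜ ⊤, the judgment fresh N T is provable if and only if N is a nominal constant and N does not occur in (the support of) T. -/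
/-- The predicate `fresh` (predicate number 0), defined by the single clause
∀E.(∇x. fresh x E) ≜ ⊤; the ∇-bound variable x is represented by the
nominal constant 0 of the clause, the ∀-bound variable E by eigenvariable 0. -/
def freshClause : Clause := ⟨0, 1, [Tm.nom 0, Tm.evar 0], Fm.top⟩

/-- A definition consisting exactly of the freshness clause. -/
def Dfresh : Set Clause := {freshClause}

/-! With an empty context and no cut, the last rule of a derivation of an atom can only be `defR`
(exchange leaves the empty context unchanged, and no left rule applies). For `fresh` the only
clause instance has head `fresh (ρ 0) (θ 0)`, and the side condition of `defR` that the
∇-constant `ρ 0` avoid the range of `θ` is exactly `ρ 0 ∉ supp T`. Conversely, `defR` with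
`ρ = a`, `θ = T` reduces `fresh a T` to `⊤`. -/

theorem GSeq.exists_clause_of_nil_atom {D : Set Clause} {b : Bool} {n : ℕ} {Γ : List Fm} {C : Fm}
    (h : GSeq D b n Γ C) (hb : b = false) (hΓ : Γ = []) {p : ℕ} {ts : List Tm}
    (hC : C = Fm.atom p ts) :
    ∃ c ∈ D, ∃ ρ θ, (∀ v i, i < c.nab → ρ i ∉ (θ v).supp) ∧ c.instHead ρ θ = Fm.atom p ts := by
  induction h with
  | idr _ _ hmem => simp [hΓ] at hmem
  | exch hperm _ ih => subst hΓ; exact ih hb (List.perm_nil.mp hperm) hC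
  | defR c hc ρ θ _ _ hθ => exact ⟨c, hc, ρ, θ, hθ, hC⟩
  | _ => simp_all

theorem freshClause_instHead (ρ : ℕ → ℕ) (θ : ℕ → Tm) :
    freshClause.instHead ρ θ = Fm.atom 0 [Tm.nom (ρ 0), θ 0] := rfl

theorem freshClause_instBody (ρ : ℕ → ℕ) (θ : ℕ → Tm) :
    freshClause.instBody ρ θ = Fm.top := rfl

theorem exists_nom_of_fresh {n : ℕ} {N T : Tm} (h : GSeq Dfresh false n [] (Fm.atom 0 [N, T])) :
    ∃ a, N = Tm.nom a ∧ a ∉ T.supp := by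
  obtain ⟨c, hc, ρ, θ, hθ, hhead⟩ := h.exists_clause_of_nil_atom rfl rfl rfl
  obtain rfl : c = freshClause := hc
  simp only [freshClause_instHead, Fm.atom.injEq, List.cons.injEq, and_true, true_and] at hhead
  obtain ⟨hN, hT⟩ := hhead
  exact ⟨ρ 0, hN.symm, hT ▸ hθ 0 0 Nat.zero_lt_one⟩

theorem GSeq.fresh_nom {b : Bool} {n a : ℕ} {Γ : List Fm} {T : Tm} (hT : T.fvB = ∅)
    (ha : a ∉ T.supp) (haΓ : a ∉ ctxSupp Γ) :
    GSeq Dfresh b (n + 2) Γ (Fm.atom 0 [Tm.nom a, T]) := by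
  rw [← freshClause_instHead (fun _ => a) (fun _ => T)]
  refine .defR freshClause (Set.mem_singleton _) _ _ ?_ ?_ ?_ ?_ ?_
  · exact fun x hx y hy _ => (Nat.lt_one_iff.mp hx).trans (Nat.lt_one_iff.mp hy).symm
  · intro i _
    simp [haΓ, freshClause]
  · exact fun _ _ _ => ha
  · exact fun _ => hT
  · rw [freshClause_instBody]
    exact .topR

theorem fresh_characterization_general (N T : Tm) (hTv : T.fvB = ∅) :
    (∃ n, GSeq Dfresh false n [] (Fm.atom 0 [N, T])) ↔
      (∃ a, N = Tm.nom a ∧ a ∉ T.supp) := by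
  constructor
  · rintro ⟨n, h⟩
    exact exists_nom_of_fresh h
  · rintro ⟨a, rfl, ha⟩
    exact ⟨2, GSeq.fresh_nom hTv ha (by simp [ctxSupp])⟩

/-- for ground terms N and T, the judgment `fresh N T` is
provable in G iff N is a nominal constant that does not occur in the support
of T. -/
theorem fresh_characterization (N T : Tm)
    (hNv : N.fvB = ∅) (hTv : T.fvB = ∅) (hNe : N.evars = ∅) (hTe : T.evars = ∅) :
    (∃ n, GSeq Dfresh false n [] (Fm.atom 0 [N, T])) ↔
      (∃ a, N = Tm.nom a ∧ a ∉ T.supp) :=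
  fresh_characterization_general N T hTv
end
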